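/- There exists a universal constant C > 0 such that the following holds. Let X : ℝ → ℝ³ be a 1-periodic C⁴ curve which is inextensible (|X'(s)| = 1 for all s), and let λ : ℝ → ℝ be 1-periodic and C¹. Set Z := X''' − λX', E := (1/2)∫₀¹|X''(s)|² ds, and D := ∫₀¹|Z'(s)|² ds. Then ‖X''''‖_{L²} ≤ C(D^{1/2}(1 + E^{1/2}) + E + E^{5/2}). -/

import Mathlib

open MeasureTheory Set
open scoped RealInnerProductSpace

noncomputable section

abbrev E3 : Type := EuclideanSpace ℝ (Fin 3)

def L2norm {F : Type*} [NormedAddCommGroup F] (f : ℝ → F) : ℝ :=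
  Real.sqrt (∫ s in (0:ℝ)..1, ‖f s‖ ^ 2)

open intervalIntegral


/-- derivative of a periodic function is periodic -/
lemma periodic_deriv' {F : Type*} [NormedAddCommGroup F] [NormedSpace ℝ F]
    {f : ℝ → F} (hf : Function.Periodic f 1) : Function.Periodic (deriv f) 1 := by
  intro x
  have h1 : (fun y : ℝ => f (y + 1)) = f := funext fun y => hf y
  calc deriv f (x + 1) = deriv (fun y : ℝ => f (y + 1)) x := (deriv_comp_add_const f 1 x).symm
    _ = deriv f x := by rw [h1]

/-- Cauchy–Schwarz for continuous functions on [0,1]. -/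
lemma cs_int {f g : ℝ → ℝ} (hf : Continuous f) (hg : Continuous g) :
    (∫ s in (0:ℝ)..1, f s * g s) ≤
      Real.sqrt (∫ s in (0:ℝ)..1, f s ^ 2) * Real.sqrt (∫ s in (0:ℝ)..1, g s ^ 2) := by
  set A := ∫ s in (0:ℝ)..1, f s ^ 2 with hA
  set B := ∫ s in (0:ℝ)..1, g s ^ 2 with hB
  set I := ∫ s in (0:ℝ)..1, f s * g s with hI
  have hA0 : 0 ≤ A := integral_nonneg (by norm_num) fun u _ => sq_nonneg _
  have hB0 : 0 ≤ B := integral_nonneg (by norm_num) fun u _ => sq_nonneg _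
  have hquad : ∀ c : ℝ, 0 ≤ A * (c * c) + (-2 * I) * c + B := by
    intro c
    have h1 : (0:ℝ) ≤ ∫ s in (0:ℝ)..1, (c * f s - g s) ^ 2 :=
      integral_nonneg (by norm_num) fun u _ => sq_nonneg _
    have h2 : (∫ s in (0:ℝ)..1, (c * f s - g s) ^ 2)
        = c ^ 2 * A - 2 * c * I + B := by
      have : ∀ s, (c * f s - g s) ^ 2
          = c ^ 2 * f s ^ 2 - 2 * c * (f s * g s) + g s ^ 2 := fun s => by ring
      rw [intervalIntegral.integral_congr (g := fun s => c ^ 2 * f s ^ 2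
            - 2 * c * (f s * g s) + g s ^ 2) (fun s _ => this s)]
      rw [intervalIntegral.integral_add (f := fun s => c ^ 2 * f s ^ 2 - 2 * c * (f s * g s))
            (g := fun s => g s ^ 2) (((continuous_const.mul (hf.pow 2)).intervalIntegrable 0 1)
            |>.sub ((continuous_const.mul (hf.mul hg)).intervalIntegrable 0 1))
            ((hg.pow 2).intervalIntegrable 0 1),
          intervalIntegral.integral_sub (f := fun s => c ^ 2 * f s ^ 2)
            (g := fun s => 2 * c * (f s * g s)) ((continuous_const.mul (hf.pow 2)).intervalIntegrable 0 1)
            ((continuous_const.mul (hf.mul hg)).intervalIntegrable 0 1),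
          intervalIntegral.integral_const_mul, intervalIntegral.integral_const_mul]
    nlinarith [h1, h2]
  have hdisc := discrim_le_zero hquad
  have hI2 : I ^ 2 ≤ A * B := by
    unfold discrim at hdisc; nlinarith [hdisc]
  calc I ≤ |I| := le_abs_self _
    _ = Real.sqrt (I ^ 2) := (Real.sqrt_sq_eq_abs I).symm
    _ ≤ Real.sqrt (A * B) := Real.sqrt_le_sqrt hI2
    _ = Real.sqrt A * Real.sqrt B := Real.sqrt_mul hA0 _

/-- FTC for a globally differentiable function with continuous derivative, periodic case. -/
lemma ftc_per {F : Type*} [NormedAddCommGroup F] [NormedSpace ℝ F] [CompleteSpace F]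
    {f g : ℝ → F} (hf : ∀ s, HasDerivAt f (g s) s) (hg : Continuous g)
    (hp : f 1 = f 0) : (∫ s in (0:ℝ)..1, g s) = 0 := by
  rw [intervalIntegral.integral_eq_sub_of_hasDerivAt (fun x _ => hf x)
    (hg.intervalIntegrable 0 1), hp, sub_self]

/-- averaging / Poincaré-type pointwise bound on [0,1] -/
lemma avg_bound {φ ψ : ℝ → ℝ} (hφ : ∀ s, HasDerivAt φ (ψ s) s) (hψ : Continuous ψ)
    {s : ℝ} (hs : s ∈ Icc (0:ℝ) 1) :
    |φ s| ≤ |∫ t in (0:ℝ)..1, φ t| + ∫ t in (0:ℝ)..1, |ψ t| := by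
  have hφc : Continuous φ :=
    continuous_iff_continuousAt.mpr fun x => (hφ x).differentiableAt.continuousAt
  have hIψ : (0:ℝ) ≤ ∫ t in (0:ℝ)..1, |ψ t| :=
    integral_nonneg (by norm_num) fun u _ => abs_nonneg _
  have key : ∀ t ∈ Icc (0:ℝ) 1, |φ s - φ t| ≤ ∫ u in (0:ℝ)..1, |ψ u| := by
    intro t ht
    have hftc : φ s - φ t = ∫ u in t..s, ψ u :=
      (intervalIntegral.integral_eq_sub_of_hasDerivAt (fun x _ => hφ x)
        (hψ.intervalIntegrable t s)).symm
    rw [hftc]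
    have h1 : |∫ u in t..s, ψ u| ≤ abs (∫ u in t..s, |ψ u|) := by
      simpa [Real.norm_eq_abs] using
        intervalIntegral.norm_integral_le_abs_integral_norm (f := ψ) (a := t) (b := s) (μ := volume)
    have hsub : Set.uIoc t s ⊆ Set.uIoc (0:ℝ) 1 := by
      rw [Set.uIoc, Set.uIoc]
      apply Set.Ioc_subset_Ioc
      · simp [le_min_iff, ht.1, hs.1]
      · simp [max_le_iff, ht.2, hs.2]
    have h2 : abs (∫ u in t..s, |ψ u|) ≤ abs (∫ u in (0:ℝ)..1, |ψ u|) :=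
      intervalIntegral.abs_integral_mono_interval hsub
        (Filter.Eventually.of_forall fun u => abs_nonneg _)
        ((hψ.abs).intervalIntegrable 0 1)
    have h3 : abs (∫ u in (0:ℝ)..1, |ψ u|) = ∫ u in (0:ℝ)..1, |ψ u| := abs_of_nonneg hIψ
    linarith
  have hconst : (∫ _t in (0:ℝ)..1, φ s) = φ s := by simp
  have hsplit : φ s = (∫ t in (0:ℝ)..1, (φ s - φ t)) + ∫ t in (0:ℝ)..1, φ t := by
    rw [intervalIntegral.integral_sub (by exact intervalIntegrable_const)
      (hφc.intervalIntegrable 0 1)]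
    rw [hconst]; ring
  have h2 : |∫ t in (0:ℝ)..1, (φ s - φ t)| ≤ ∫ u in (0:ℝ)..1, |ψ u| := by
    calc |∫ t in (0:ℝ)..1, (φ s - φ t)| ≤ ∫ t in (0:ℝ)..1, |φ s - φ t| :=
          intervalIntegral.abs_integral_le_integral_abs (by norm_num)
      _ ≤ ∫ t in (0:ℝ)..1, (∫ u in (0:ℝ)..1, |ψ u|) := by
          refine intervalIntegral.integral_mono_on (by norm_num)
            ((continuous_const.sub hφc).abs.intervalIntegrable 0 1)
            intervalIntegrable_const key
      _ = ∫ u in (0:ℝ)..1, |ψ u| := by simp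
  have habs : |φ s| ≤ |∫ t in (0:ℝ)..1, (φ s - φ t)| + |∫ t in (0:ℝ)..1, φ t| := by
    calc |φ s| = |(∫ t in (0:ℝ)..1, (φ s - φ t)) + ∫ t in (0:ℝ)..1, φ t| := by rw [← hsplit]
      _ ≤ _ := abs_add_le _ _
  linarith

lemma e_cube {e : ℝ} (he : 0 ≤ e) : e^3 ≤ e^2 + e^5 := by
  nlinarith [mul_nonneg he (sq_nonneg (e-1)), sq_nonneg (2*e-1), sq_nonneg e,
    mul_nonneg (sq_nonneg e) (mul_nonneg he (sq_nonneg (e-1))),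
    mul_nonneg (sq_nonneg e) (sq_nonneg (2*e-1))]

lemma closing {a d e t M : ℝ} (ha : 0 ≤ a) (hd : 0 ≤ d) (he : 0 ≤ e) (ht : 0 ≤ t)
    (hM : 0 ≤ M) (h1 : t^2 ≤ a*e) (h2 : M^2 ≤ e^2 + 2*t*e)
    (h3 : a ≤ 2*d + (e^2 + 2*d + 3*t*e)*e + 3*M*t) :
    a ≤ 100000*(d + d*e + e^2 + e^5) := by
  rcases eq_or_lt_of_le he with he0 | he'
  · -- e = 0
    have he0' : e = 0 := he0.symm
    subst he0'
    have ht0 : t = 0 := by nlinarith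
    have hM0 : M = 0 := by nlinarith
    subst ht0; subst hM0
    nlinarith
  · -- e > 0
    have s1 : 3*M*t ≤ a/12 + 27*e*M^2 := by
      nlinarith [sq_nonneg (t - 18*e*M), h1, mul_pos he' he', sq_nonneg t, sq_nonneg M]
    have s2 : 27*e*M^2 ≤ 27*e^3 + 54*e^2*t := by nlinarith [h2, he']
    have s3 : 54*e^2*t ≤ a/12 + 8748*e^5 := by
      nlinarith [sq_nonneg (t - 324*e^3), h1, he', sq_nonneg e]
    have s4 : 3*t*e^2 ≤ 54*e^2*t := by nlinarith [mul_nonneg ht (sq_nonneg e)]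
    have hc := e_cube he
    nlinarith [s1, s2, s3, s4, hc, h3]

set_option maxHeartbeats 2000000

/-- the energy dissipation controls the fourth derivative of a
closed (1-periodic) inextensible filament. -/
theorem dissipation_controls_Xssss_closed_loop :
    ∃ C : ℝ, 0 < C ∧
      ∀ (X : ℝ → E3) (lam : ℝ → ℝ),
        ContDiff ℝ 4 X → Function.Periodic X 1 →
        ContDiff ℝ 1 lam → Function.Periodic lam 1 →
        (∀ s, ‖deriv X s‖ = 1) →
        ∀ (E D : ℝ),
          E = (1/2) * ∫ s in (0:ℝ)..1, ‖iteratedDeriv 2 X s‖ ^ 2 →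
          D = ∫ s in (0:ℝ)..1,
              ‖deriv (fun u => iteratedDeriv 3 X u - lam u • deriv X u) s‖ ^ 2 →
          L2norm (iteratedDeriv 4 X) ≤
            C * (Real.sqrt D * (1 + Real.sqrt E) + E + E ^ ((5:ℝ)/2)) := by

  refine ⟨1000000, by norm_num, ?_⟩
  intro X lam hX hXper hlamC hlamper hunit E D hE hD
  set X2 := iteratedDeriv 2 X with hX2def
  set X3 := iteratedDeriv 3 X with hX3def
  set X4 := iteratedDeriv 4 X with hX4def
  -- derivatives
  have hder : ∀ n : ℕ, n < 4 → ∀ s, HasDerivAt (iteratedDeriv n X) (iteratedDeriv (n+1) X s) s := by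
    intro n hn s
    have h := hX.differentiable_iteratedDeriv n (by exact_mod_cast hn)
    rw [iteratedDeriv_succ]
    exact (h s).hasDerivAt
  have hd0 : ∀ s, HasDerivAt X (deriv X s) s := fun s =>
    ((hX.differentiable (by norm_num)) s).hasDerivAt
  have hd1 : ∀ s, HasDerivAt (deriv X) (X2 s) s := by
    intro s
    have := hder 1 (by norm_num) s
    rwa [iteratedDeriv_one] at this
  have hd2 : ∀ s, HasDerivAt X2 (X3 s) s := fun s => hder 2 (by norm_num) s
  have hd3 : ∀ s, HasDerivAt X3 (X4 s) s := fun s => hder 3 (by norm_num) s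
  have hlamd : ∀ s, HasDerivAt lam (deriv lam s) s := fun s =>
    ((hlamC.differentiable (by norm_num)) s).hasDerivAt
  -- continuity
  have cX1 : Continuous (deriv X) := hX.continuous_deriv (by norm_num)
  have cX2 : Continuous X2 := hX.continuous_iteratedDeriv 2 (by norm_num)
  have cX3 : Continuous X3 := hX.continuous_iteratedDeriv 3 (by norm_num)
  have cX4 : Continuous X4 := hX.continuous_iteratedDeriv 4 (by norm_num)
  have clam : Continuous lam := hlamC.continuous
  have clam' : Continuous (deriv lam) := hlamC.continuous_deriv le_rfl
  -- Z and W
  set Z : ℝ → E3 := fun u => X3 u - lam u • deriv X u with hZdef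
  set W : ℝ → E3 := fun s => X4 s - (lam s • X2 s + deriv lam s • deriv X s) with hWdef
  have hZd : ∀ s, HasDerivAt Z (W s) s := fun s => (hd3 s).sub ((hlamd s).smul (hd1 s))
  have hderivZ : deriv Z = W := funext fun s => (hZd s).deriv
  rw [hderivZ] at hD
  have cW : Continuous W := cX4.sub ((clam.smul cX2).add (clam'.smul cX1))
  have cZ : Continuous Z := cX3.sub (clam.smul cX1)
  -- periodicity
  have pIter : ∀ n, Function.Periodic (iteratedDeriv n X) 1 := by
    intro n
    induction n with
    | zero => simpa [iteratedDeriv_zero] using hXper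
    | succ n ih => rw [iteratedDeriv_succ]; exact periodic_deriv' ih
  have pX1 : Function.Periodic (deriv X) 1 := periodic_deriv' hXper
  have pZ : Z 1 = Z 0 := by
    simp only [hZdef]
    rw [show X3 (1:ℝ) = X3 0 by simpa using pIter 3 0,
        show lam (1:ℝ) = lam 0 by simpa using hlamper 0,
        show deriv X (1:ℝ) = deriv X 0 by simpa using pX1 0]
  -- unit tangent identities
  have h11 : ∀ s, ⟪deriv X s, deriv X s⟫ = 1 := fun s => by
    rw [real_inner_self_eq_norm_sq, hunit s]; norm_num
  have h21 : ∀ s, ⟪X2 s, deriv X s⟫ = 0 := by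
    intro s
    have hh : HasDerivAt (fun t => ⟪deriv X t, deriv X t⟫)
        (⟪deriv X s, X2 s⟫ + ⟪X2 s, deriv X s⟫) s :=
      HasDerivAt.inner ℝ (hd1 s) (hd1 s)
    rw [funext h11] at hh
    have h0 : ⟪deriv X s, X2 s⟫ + ⟪X2 s, deriv X s⟫ = 0 := by
      have := hh.deriv
      simpa using this.symm
    have hcomm : ⟪deriv X s, X2 s⟫ = ⟪X2 s, deriv X s⟫ := real_inner_comm _ _
    linarith
  have h31 : ∀ s, ⟪X3 s, deriv X s⟫ = -⟪X2 s, X2 s⟫ := by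
    intro s
    have hh : HasDerivAt (fun t => ⟪X2 t, deriv X t⟫)
        (⟪X2 s, X2 s⟫ + ⟪X3 s, deriv X s⟫) s :=
      HasDerivAt.inner ℝ (hd2 s) (hd1 s)
    rw [show (fun t => ⟪X2 t, deriv X t⟫) = fun _ => (0:ℝ) from funext h21] at hh
    have h0 : ⟪X2 s, X2 s⟫ + ⟪X3 s, deriv X s⟫ = 0 := by
      have := hh.deriv
      simpa using this.symm
    linarith
  have h41 : ∀ s, ⟪X4 s, deriv X s⟫ = -(3 * ⟪X3 s, X2 s⟫) := by
    intro s
    have hp : HasDerivAt (fun t => ⟪X3 t, deriv X t⟫)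
        (⟪X3 s, X2 s⟫ + ⟪X4 s, deriv X s⟫) s :=
      HasDerivAt.inner ℝ (hd3 s) (hd1 s)
    have hq : HasDerivAt (fun t => -⟪X2 t, X2 t⟫)
        (-(⟪X2 s, X3 s⟫ + ⟪X3 s, X2 s⟫)) s :=
      (HasDerivAt.inner ℝ (hd2 s) (hd2 s)).neg
    rw [show (fun t => ⟪X3 t, deriv X t⟫) = fun t => -⟪X2 t, X2 t⟫ from
      funext fun t => by rw [h31 t]] at hp
    have huniq := hp.unique hq
    have hcomm : ⟪X2 s, X3 s⟫ = ⟪X3 s, X2 s⟫ := real_inner_comm _ _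
    linarith
  -- lambda identities
  have hlam_eq : ∀ s, lam s = -⟪X2 s, X2 s⟫ - ⟪Z s, deriv X s⟫ := by
    intro s
    have hz : ⟪Z s, deriv X s⟫
        = ⟪X3 s, deriv X s⟫ - lam s * ⟪deriv X s, deriv X s⟫ := by
      simp only [hZdef, inner_sub_left, real_inner_smul_left]
    rw [h31 s, h11 s] at hz
    linarith
  have hlam'_eq : ∀ s, deriv lam s = -(3 * ⟪X3 s, X2 s⟫) - ⟪W s, deriv X s⟫ := by
    intro s
    have hw : ⟪W s, deriv X s⟫ = ⟪X4 s, deriv X s⟫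
        - (lam s * ⟪X2 s, deriv X s⟫ + deriv lam s * ⟪deriv X s, deriv X s⟫) := by
      simp only [hWdef, inner_sub_left, inner_add_left, real_inner_smul_left]
    rw [h41 s, h21 s, h11 s] at hw
    linarith
  -- scalar quantities
  have hIX4 : (0:ℝ) ≤ ∫ s in (0:ℝ)..1, ‖X4 s‖^2 :=
    intervalIntegral.integral_nonneg (by norm_num) fun u _ => sq_nonneg _
  have hIX3 : (0:ℝ) ≤ ∫ s in (0:ℝ)..1, ‖X3 s‖^2 :=
    intervalIntegral.integral_nonneg (by norm_num) fun u _ => sq_nonneg _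
  have hIX2 : (0:ℝ) ≤ ∫ s in (0:ℝ)..1, ‖X2 s‖^2 :=
    intervalIntegral.integral_nonneg (by norm_num) fun u _ => sq_nonneg _
  have hD0 : (0:ℝ) ≤ D := by
    rw [hD]; exact intervalIntegral.integral_nonneg (by norm_num) fun u _ => sq_nonneg _
  have hE0 : (0:ℝ) ≤ E := by rw [hE]; positivity
  set a := Real.sqrt (∫ s in (0:ℝ)..1, ‖X4 s‖^2) with hadef
  set t := Real.sqrt (∫ s in (0:ℝ)..1, ‖X3 s‖^2) with htdef
  set e := Real.sqrt (∫ s in (0:ℝ)..1, ‖X2 s‖^2) with hedef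
  set d := Real.sqrt D with hddef
  have ha0 : 0 ≤ a := Real.sqrt_nonneg _
  have ht0 : 0 ≤ t := Real.sqrt_nonneg _
  have he0 : 0 ≤ e := Real.sqrt_nonneg _
  have hd_nn : 0 ≤ d := Real.sqrt_nonneg _
  have ha2 : a^2 = ∫ s in (0:ℝ)..1, ‖X4 s‖^2 := by rw [hadef, Real.sq_sqrt hIX4]
  have ht2 : t^2 = ∫ s in (0:ℝ)..1, ‖X3 s‖^2 := by rw [htdef, Real.sq_sqrt hIX3]
  have he2 : e^2 = ∫ s in (0:ℝ)..1, ‖X2 s‖^2 := by rw [hedef, Real.sq_sqrt hIX2]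
  have he2E : e^2 = 2*E := by rw [he2]; linarith
  have hdsq : d^2 = D := by rw [hddef, Real.sq_sqrt hD0]
  -- Cauchy-Schwarz instances
  have cs_ae : (∫ s in (0:ℝ)..1, ‖X4 s‖ * ‖X2 s‖) ≤ a * e := by
    rw [hadef, hedef]; exact cs_int cX4.norm cX2.norm
  have cs_ad : (∫ s in (0:ℝ)..1, ‖X4 s‖ * ‖W s‖) ≤ a * d := by
    rw [hadef, hddef, hD]; exact cs_int cX4.norm cW.norm
  have cs_te : (∫ s in (0:ℝ)..1, ‖X3 s‖ * ‖X2 s‖) ≤ t * e := by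
    rw [htdef, hedef]; exact cs_int cX3.norm cX2.norm
  have cs_ta : (∫ s in (0:ℝ)..1, ‖X3 s‖ * ‖X4 s‖) ≤ t * a := by
    rw [htdef, hadef]; exact cs_int cX3.norm cX4.norm
  have cs_w1 : (∫ s in (0:ℝ)..1, ‖W s‖) ≤ d := by
    have h := cs_int (f := fun s => ‖W s‖) (g := fun _ => (1:ℝ)) cW.norm continuous_const
    rw [hddef, hD]
    simpa using h
  -- t^2 ≤ a * e (integration by parts)
  have hta : t^2 ≤ a * e := by
    have hft : ∀ s, HasDerivAt (fun u => ⟪X3 u, X2 u⟫) (⟪X3 s, X3 s⟫ + ⟪X4 s, X2 s⟫) s :=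
      fun s => HasDerivAt.inner ℝ (hd3 s) (hd2 s)
    have hper : (fun u => ⟪X3 u, X2 u⟫) 1 = (fun u => ⟪X3 u, X2 u⟫) 0 := by
      show ⟪X3 1, X2 1⟫ = ⟪X3 0, X2 0⟫
      rw [show X3 (1:ℝ) = X3 0 by simpa using pIter 3 0,
          show X2 (1:ℝ) = X2 0 by simpa using pIter 2 0]
    have hint0 : (∫ s in (0:ℝ)..1, (⟪X3 s, X3 s⟫ + ⟪X4 s, X2 s⟫)) = 0 :=
      ftc_per hft ((cX3.inner cX3).add (cX4.inner cX2)) hper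
    have hsplit : (∫ s in (0:ℝ)..1, ⟪X3 s, X3 s⟫) + (∫ s in (0:ℝ)..1, ⟪X4 s, X2 s⟫) = 0 := by
      rw [← intervalIntegral.integral_add ((cX3.inner cX3).intervalIntegrable 0 1)
        ((cX4.inner cX2).intervalIntegrable 0 1)]
      exact hint0
    have hX33 : (∫ s in (0:ℝ)..1, ⟪X3 s, X3 s⟫) = ∫ s in (0:ℝ)..1, ‖X3 s‖^2 :=
      intervalIntegral.integral_congr fun s _ => real_inner_self_eq_norm_sq _
    have hb : (∫ s in (0:ℝ)..1, -⟪X4 s, X2 s⟫) ≤ ∫ s in (0:ℝ)..1, ‖X4 s‖ * ‖X2 s‖ := by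
      refine intervalIntegral.integral_mono_on (by norm_num)
        (((cX4.inner cX2).neg).intervalIntegrable 0 1)
        ((cX4.norm.mul cX2.norm).intervalIntegrable 0 1) fun s _ => ?_
      have := abs_real_inner_le_norm (X4 s) (X2 s)
      have := neg_abs_le ⟪X4 s, X2 s⟫
      linarith
    have hbneg : (∫ s in (0:ℝ)..1, -⟪X4 s, X2 s⟫) = -(∫ s in (0:ℝ)..1, ⟪X4 s, X2 s⟫) :=
      intervalIntegral.integral_neg
    rw [ht2]
    linarith
  have hintX22 : (∫ u in (0:ℝ)..1, ⟪X2 u, X2 u⟫) = e^2 := by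
    rw [he2]
    exact intervalIntegral.integral_congr fun s _ => real_inner_self_eq_norm_sq _
  -- sup bound for X2
  set M := Real.sqrt (e^2 + 2*(t*e)) with hMdef
  have hM0 : 0 ≤ M := Real.sqrt_nonneg _
  have hM2 : M^2 = e^2 + 2*(t*e) := by
    rw [hMdef, Real.sq_sqrt (by positivity)]
  have hMpt : ∀ s ∈ Icc (0:ℝ) 1, ‖X2 s‖ ≤ M := by
    intro s hs
    have hd22 : ∀ u, HasDerivAt (fun v => ⟪X2 v, X2 v⟫) (⟪X2 u, X3 u⟫ + ⟪X3 u, X2 u⟫) u :=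
      fun u => HasDerivAt.inner ℝ (hd2 u) (hd2 u)
    have havg := avg_bound hd22 ((cX2.inner cX3).add (cX3.inner cX2)) hs
    have hpsi : (∫ u in (0:ℝ)..1, |⟪X2 u, X3 u⟫ + ⟪X3 u, X2 u⟫|) ≤ 2*(t*e) := by
      have hmono : (∫ u in (0:ℝ)..1, |⟪X2 u, X3 u⟫ + ⟪X3 u, X2 u⟫|)
          ≤ ∫ u in (0:ℝ)..1, 2*(‖X3 u‖ * ‖X2 u‖) := by
        refine intervalIntegral.integral_mono_on (by norm_num)
          (((cX2.inner cX3).add (cX3.inner cX2)).abs.intervalIntegrable 0 1)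
          ((continuous_const.mul (cX3.norm.mul cX2.norm)).intervalIntegrable 0 1) fun u _ => ?_
        have h1 := abs_real_inner_le_norm (X2 u) (X3 u)
        have h2 := abs_real_inner_le_norm (X3 u) (X2 u)
        have h3 := abs_add_le ⟪X2 u, X3 u⟫ ⟪X3 u, X2 u⟫
        rw [mul_comm] at h1
        linarith
      have heq : (∫ u in (0:ℝ)..1, 2*(‖X3 u‖ * ‖X2 u‖))
          = 2 * ∫ u in (0:ℝ)..1, ‖X3 u‖ * ‖X2 u‖ := intervalIntegral.integral_const_mul _ _
      linarith [cs_te]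
    have habs1 : |∫ u in (0:ℝ)..1, ⟪X2 u, X2 u⟫| = e^2 := by
      rw [hintX22]; exact abs_of_nonneg (by positivity)
    have habs2 : |⟪X2 s, X2 s⟫| = ‖X2 s‖^2 := by
      rw [real_inner_self_eq_norm_sq]; exact abs_of_nonneg (sq_nonneg _)
    have hsq : ‖X2 s‖^2 ≤ e^2 + 2*(t*e) := by
      rw [← habs2]; linarith [havg]
    calc ‖X2 s‖ = Real.sqrt (‖X2 s‖^2) := (Real.sqrt_sq (norm_nonneg _)).symm
      _ ≤ M := by rw [hMdef]; exact Real.sqrt_le_sqrt hsq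
  -- bound for |∫ ⟪Z, X'⟫|
  have hZ0pt : ∀ s ∈ Icc (0:ℝ) 1, ‖Z s - Z 0‖ ≤ d := by
    intro s hs
    have hftc : (∫ u in (0:ℝ)..s, W u) = Z s - Z 0 :=
      intervalIntegral.integral_eq_sub_of_hasDerivAt (fun x _ => hZd x)
        (cW.intervalIntegrable 0 s)
    rw [← hftc]
    calc ‖∫ u in (0:ℝ)..s, W u‖ ≤ ∫ u in (0:ℝ)..s, ‖W u‖ :=
          intervalIntegral.norm_integral_le_integral_norm hs.1
      _ ≤ ∫ u in (0:ℝ)..1, ‖W u‖ :=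
          intervalIntegral.integral_mono_interval le_rfl hs.1 hs.2
            (Filter.Eventually.of_forall fun u => norm_nonneg _)
            (cW.norm.intervalIntegrable 0 1)
      _ ≤ d := cs_w1
  have hZint0 : (∫ s in (0:ℝ)..1, ⟪Z 0, deriv X s⟫) = 0 := by
    have hf : ∀ s, HasDerivAt (fun u => ⟪Z 0, X u⟫) (⟪Z 0, deriv X s⟫) s := fun s => by
      simpa using HasDerivAt.inner ℝ (hasDerivAt_const s (Z 0)) (hd0 s)
    refine ftc_per hf (continuous_const.inner cX1) ?_
    show ⟪Z 0, X 1⟫ = ⟪Z 0, X 0⟫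
    rw [show X (1:ℝ) = X 0 by simpa using hXper 0]
  have hIZX : |∫ s in (0:ℝ)..1, ⟪Z s, deriv X s⟫| ≤ d := by
    have hsplit : (∫ s in (0:ℝ)..1, ⟪Z s, deriv X s⟫)
        = (∫ s in (0:ℝ)..1, ⟪Z s - Z 0, deriv X s⟫) + ∫ s in (0:ℝ)..1, ⟪Z 0, deriv X s⟫ := by
      rw [← intervalIntegral.integral_add (((cZ.sub continuous_const).inner cX1).intervalIntegrable 0 1)
        ((continuous_const.inner cX1).intervalIntegrable 0 1)]
      refine intervalIntegral.integral_congr fun s _ => ?_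
      rw [← inner_add_left, sub_add_cancel]
    rw [hsplit, hZint0, add_zero]
    have h1 : |∫ s in (0:ℝ)..1, ⟪Z s - Z 0, deriv X s⟫|
        ≤ ∫ s in (0:ℝ)..1, |⟪Z s - Z 0, deriv X s⟫| :=
      intervalIntegral.abs_integral_le_integral_abs (by norm_num)
    have h2 : (∫ s in (0:ℝ)..1, |⟪Z s - Z 0, deriv X s⟫|) ≤ ∫ s in (0:ℝ)..1, d := by
      refine intervalIntegral.integral_mono_on (by norm_num)
        (((cZ.sub continuous_const).inner cX1).abs.intervalIntegrable 0 1)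
        intervalIntegrable_const fun s hs => ?_
      have ha := abs_real_inner_le_norm (Z s - Z 0) (deriv X s)
      rw [hunit s, mul_one] at ha
      exact ha.trans (hZ0pt s hs)
    have h3 : (∫ s in (0:ℝ)..1, d) = d := by simp
    linarith
  -- lambda bounds
  have hlamint : |∫ s in (0:ℝ)..1, lam s| ≤ e^2 + d := by
    have hsplit : (∫ s in (0:ℝ)..1, lam s)
        = -(∫ s in (0:ℝ)..1, ⟪X2 s, X2 s⟫) - ∫ s in (0:ℝ)..1, ⟪Z s, deriv X s⟫ := by
      rw [← intervalIntegral.integral_neg, ← intervalIntegral.integral_sub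
        ((cX2.inner cX2).neg.intervalIntegrable 0 1) ((cZ.inner cX1).intervalIntegrable 0 1)]
      exact intervalIntegral.integral_congr fun s _ => hlam_eq s
    rw [hsplit, hintX22]
    have := abs_le.mp hIZX
    refine abs_le.mpr ⟨by nlinarith, by nlinarith [sq_nonneg e]⟩
  have hlam'int : (∫ s in (0:ℝ)..1, |deriv lam s|) ≤ 3*(t*e) + d := by
    have hmono : (∫ s in (0:ℝ)..1, |deriv lam s|)
        ≤ ∫ s in (0:ℝ)..1, (3*(‖X3 s‖ * ‖X2 s‖) + ‖W s‖) := by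
      refine intervalIntegral.integral_mono_on (by norm_num)
        (clam'.abs.intervalIntegrable 0 1)
        (((continuous_const.mul (cX3.norm.mul cX2.norm)).add cW.norm).intervalIntegrable 0 1)
        fun s _ => ?_
      rw [hlam'_eq s]
      have h1 := abs_real_inner_le_norm (X3 s) (X2 s)
      have h2 := abs_real_inner_le_norm (W s) (deriv X s)
      rw [hunit s, mul_one] at h2
      calc |-(3 * ⟪X3 s, X2 s⟫) - ⟪W s, deriv X s⟫|
          ≤ |(3 * ⟪X3 s, X2 s⟫)| + |⟪W s, deriv X s⟫| := by
            rw [show -(3 * ⟪X3 s, X2 s⟫) - ⟪W s, deriv X s⟫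
              = -((3 * ⟪X3 s, X2 s⟫) + ⟪W s, deriv X s⟫) by ring, abs_neg]
            exact abs_add_le _ _
        _ ≤ 3*(‖X3 s‖ * ‖X2 s‖) + ‖W s‖ := by
            rw [abs_mul, show |(3:ℝ)| = 3 by norm_num]
            linarith
    have hspl : (∫ s in (0:ℝ)..1, (3*(‖X3 s‖ * ‖X2 s‖) + ‖W s‖))
        = 3*(∫ s in (0:ℝ)..1, ‖X3 s‖ * ‖X2 s‖) + ∫ s in (0:ℝ)..1, ‖W s‖ := by
      rw [intervalIntegral.integral_add (f := fun s => 3*(‖X3 s‖ * ‖X2 s‖)) (g := fun s => ‖W s‖)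
        ((continuous_const.mul (cX3.norm.mul cX2.norm)).intervalIntegrable 0 1)
        (cW.norm.intervalIntegrable 0 1), intervalIntegral.integral_const_mul]
    nlinarith [cs_te, cs_w1]
  have hlampt : ∀ s ∈ Icc (0:ℝ) 1, |lam s| ≤ e^2 + 2*d + 3*(t*e) := by
    intro s hs
    have := avg_bound hlamd clam' hs
    linarith
  have hlam'pt : ∀ s, |deriv lam s| ≤ 3*(‖X3 s‖ * ‖X2 s‖) + ‖W s‖ := by
    intro s
    rw [hlam'_eq s]
    have h1 := abs_real_inner_le_norm (X3 s) (X2 s)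
    have h2 := abs_real_inner_le_norm (W s) (deriv X s)
    rw [hunit s, mul_one] at h2
    calc |-(3 * ⟪X3 s, X2 s⟫) - ⟪W s, deriv X s⟫|
        ≤ |(3 * ⟪X3 s, X2 s⟫)| + |⟪W s, deriv X s⟫| := by
          rw [show -(3 * ⟪X3 s, X2 s⟫) - ⟪W s, deriv X s⟫
            = -((3 * ⟪X3 s, X2 s⟫) + ⟪W s, deriv X s⟫) by ring, abs_neg]
          exact abs_add_le _ _
      _ ≤ 3*(‖X3 s‖ * ‖X2 s‖) + ‖W s‖ := by
          rw [abs_mul, show |(3:ℝ)| = 3 by norm_num]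
          linarith
  have hLc0 : (0:ℝ) ≤ e^2 + 2*d + 3*(t*e) := by
    have := mul_nonneg ht0 he0
    nlinarith [sq_nonneg e]
  -- pointwise main bound
  have hptmain : ∀ s ∈ Icc (0:ℝ) 1, ‖X4 s‖^2 ≤
      (‖X4 s‖ * ‖W s‖ + (e^2 + 2*d + 3*(t*e))*(‖X4 s‖ * ‖X2 s‖))
      + (3*M*(‖X3 s‖ * ‖X4 s‖) + ‖W s‖ * ‖X4 s‖) := by
    intro s hs
    have hXW : X4 s = W s + (lam s • X2 s + deriv lam s • deriv X s) := by
      simp only [hWdef]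
      rw [sub_add_cancel]
    have h0 : ⟪X4 s, X4 s⟫ = ⟪X4 s, W s⟫ + lam s * ⟪X4 s, X2 s⟫
        + deriv lam s * ⟪X4 s, deriv X s⟫ := by
      calc ⟪X4 s, X4 s⟫
          = ⟪X4 s, W s + (lam s • X2 s + deriv lam s • deriv X s)⟫ := by rw [← hXW]
        _ = _ := by
            rw [inner_add_right, inner_add_right, real_inner_smul_right,
              real_inner_smul_right]
            ring
    have e1 : ⟪X4 s, W s⟫ ≤ ‖X4 s‖ * ‖W s‖ := real_inner_le_norm _ _
    have h42 : |⟪X4 s, X2 s⟫| ≤ ‖X4 s‖ * ‖X2 s‖ := abs_real_inner_le_norm _ _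
    have k1 : lam s * ⟪X4 s, X2 s⟫ ≤ |lam s| * |⟪X4 s, X2 s⟫| := by
      rw [← abs_mul]; exact le_abs_self _
    have k2 : |lam s| * |⟪X4 s, X2 s⟫| ≤ (e^2 + 2*d + 3*(t*e)) * (‖X4 s‖ * ‖X2 s‖) :=
      mul_le_mul (hlampt s hs) h42 (abs_nonneg _) hLc0
    have f2 : |⟪X4 s, deriv X s⟫| ≤ ‖X4 s‖ := by
      have := abs_real_inner_le_norm (X4 s) (deriv X s)
      rwa [hunit s, mul_one] at this
    have g1 : deriv lam s * ⟪X4 s, deriv X s⟫ ≤ |deriv lam s| * ‖X4 s‖ := by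
      calc deriv lam s * ⟪X4 s, deriv X s⟫ ≤ |deriv lam s * ⟪X4 s, deriv X s⟫| :=
            le_abs_self _
        _ = |deriv lam s| * |⟪X4 s, deriv X s⟫| := abs_mul _ _
        _ ≤ |deriv lam s| * ‖X4 s‖ := mul_le_mul_of_nonneg_left f2 (abs_nonneg _)
    have g2 : |deriv lam s| * ‖X4 s‖ ≤ (3*(‖X3 s‖ * ‖X2 s‖) + ‖W s‖) * ‖X4 s‖ :=
      mul_le_mul_of_nonneg_right (hlam'pt s) (norm_nonneg _)
    have g4 : (3*(‖X3 s‖ * ‖X2 s‖)) * ‖X4 s‖ ≤ (3*(‖X3 s‖ * M)) * ‖X4 s‖ := by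
      have h3' : ‖X3 s‖ * ‖X2 s‖ ≤ ‖X3 s‖ * M :=
        mul_le_mul_of_nonneg_left (hMpt s hs) (norm_nonneg _)
      have := mul_le_mul_of_nonneg_right h3' (norm_nonneg (X4 s))
      linarith [this]
    rw [← real_inner_self_eq_norm_sq, h0]
    linarith [e1, k1, k2, g1, g2, g4]
  -- integrate
  have cs_da : (∫ s in (0:ℝ)..1, ‖W s‖ * ‖X4 s‖) ≤ d * a := by
    rw [hddef, hadef, hD]; exact cs_int cW.norm cX4.norm
  have hint : a^2 ≤ a*d + (e^2 + 2*d + 3*(t*e))*(a*e) + (3*M*(t*a) + d*a) := by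
    have cA : Continuous fun s => ‖X4 s‖ * ‖W s‖ := cX4.norm.mul cW.norm
    have cB : Continuous fun s => (e^2 + 2*d + 3*(t*e))*(‖X4 s‖ * ‖X2 s‖) :=
      continuous_const.mul (cX4.norm.mul cX2.norm)
    have cC : Continuous fun s => 3*M*(‖X3 s‖ * ‖X4 s‖) :=
      continuous_const.mul (cX3.norm.mul cX4.norm)
    have cD' : Continuous fun s => ‖W s‖ * ‖X4 s‖ := cW.norm.mul cX4.norm
    have hmono : (∫ s in (0:ℝ)..1, ‖X4 s‖^2)
        ≤ ∫ s in (0:ℝ)..1, ((‖X4 s‖ * ‖W s‖ + (e^2 + 2*d + 3*(t*e))*(‖X4 s‖ * ‖X2 s‖))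
          + (3*M*(‖X3 s‖ * ‖X4 s‖) + ‖W s‖ * ‖X4 s‖)) :=
      intervalIntegral.integral_mono_on (by norm_num)
        ((cX4.norm.pow 2).intervalIntegrable 0 1)
        (((cA.add cB).add (cC.add cD')).intervalIntegrable 0 1) hptmain
    have hsplit : (∫ s in (0:ℝ)..1, ((‖X4 s‖ * ‖W s‖ + (e^2 + 2*d + 3*(t*e))*(‖X4 s‖ * ‖X2 s‖))
          + (3*M*(‖X3 s‖ * ‖X4 s‖) + ‖W s‖ * ‖X4 s‖)))
        = ((∫ s in (0:ℝ)..1, ‖X4 s‖ * ‖W s‖)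
            + (e^2 + 2*d + 3*(t*e)) * ∫ s in (0:ℝ)..1, ‖X4 s‖ * ‖X2 s‖)
          + (3*M*(∫ s in (0:ℝ)..1, ‖X3 s‖ * ‖X4 s‖) + ∫ s in (0:ℝ)..1, ‖W s‖ * ‖X4 s‖) := by
      rw [intervalIntegral.integral_add
            (f := fun s => ‖X4 s‖ * ‖W s‖ + (e^2 + 2*d + 3*(t*e))*(‖X4 s‖ * ‖X2 s‖))
            (g := fun s => 3*M*(‖X3 s‖ * ‖X4 s‖) + ‖W s‖ * ‖X4 s‖) ((cA.add cB).intervalIntegrable 0 1)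
            ((cC.add cD').intervalIntegrable 0 1),
          intervalIntegral.integral_add (cA.intervalIntegrable 0 1) (cB.intervalIntegrable 0 1),
          intervalIntegral.integral_add (cC.intervalIntegrable 0 1) (cD'.intervalIntegrable 0 1),
          intervalIntegral.integral_const_mul, intervalIntegral.integral_const_mul]
    have hB : (e^2 + 2*d + 3*(t*e)) * (∫ s in (0:ℝ)..1, ‖X4 s‖ * ‖X2 s‖)
        ≤ (e^2 + 2*d + 3*(t*e)) * (a*e) := mul_le_mul_of_nonneg_left cs_ae hLc0
    have hC : 3*M*(∫ s in (0:ℝ)..1, ‖X3 s‖ * ‖X4 s‖) ≤ 3*M*(t*a) :=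
      mul_le_mul_of_nonneg_left cs_ta (by linarith)
    rw [ha2]
    linarith [hmono, hsplit, cs_ad, cs_da, hB, hC]
  have hKey : a ≤ 2*d + (e^2 + 2*d + 3*(t*e))*e + 3*(M*t) := by
    have hRHS0 : 0 ≤ 2*d + (e^2 + 2*d + 3*(t*e))*e + 3*(M*t) := by
      have := mul_nonneg hLc0 he0
      have := mul_nonneg hM0 ht0
      linarith
    rcases eq_or_lt_of_le ha0 with h | h
    · linarith
    · have hmul : a*a ≤ a*(2*d + (e^2 + 2*d + 3*(t*e))*e + 3*(M*t)) := by
        calc a*a = a^2 := by ring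
          _ ≤ a*d + (e^2 + 2*d + 3*(t*e))*(a*e) + (3*M*(t*a) + d*a) := hint
          _ = a*(2*d + (e^2 + 2*d + 3*(t*e))*e + 3*(M*t)) := by ring
      exact le_of_mul_le_mul_left hmul h
  have hclose : a ≤ 100000*(d + d*e + e^2 + e^5) := by
    refine closing ha0 hd_nn he0 ht0 hM0 hta (le_of_eq (by rw [hM2]; ring)) ?_
    exact le_of_le_of_eq hKey (by ring)
  -- final numeric conversion
  have hL2 : L2norm X4 = a := by rw [hadef]; rfl
  rw [hL2]
  have hE52 : E^((5:ℝ)/2) = (Real.sqrt E)^5 := by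
    rw [show ((5:ℝ)/2) = (1/2) * ((5:ℕ):ℝ) by norm_num, Real.rpow_mul hE0,
      Real.rpow_natCast, ← Real.sqrt_eq_rpow]
  have heval : e = Real.sqrt 2 * Real.sqrt E := by
    rw [hedef, show (∫ s in (0:ℝ)..1, ‖X2 s‖^2) = 2*E by linarith,
      Real.sqrt_mul (by norm_num : (0:ℝ) ≤ 2)]
  have hsqrt2 : (Real.sqrt 2)^2 = 2 := Real.sq_sqrt (by norm_num)
  have hs2le : Real.sqrt 2 ≤ 2 := by
    have h1 : Real.sqrt 2 ≤ Real.sqrt 4 := Real.sqrt_le_sqrt (by norm_num)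
    have h2 : Real.sqrt 4 = 2 := by
      rw [show (4:ℝ) = 2^2 by norm_num, Real.sqrt_sq (by norm_num : (0:ℝ) ≤ 2)]
    linarith
  have hsE2 : (Real.sqrt E)^2 = E := Real.sq_sqrt hE0
  have hsE0 : 0 ≤ Real.sqrt E := Real.sqrt_nonneg _
  have h25 : (Real.sqrt 2)^5 = 4*Real.sqrt 2 := by
    calc (Real.sqrt 2)^5 = ((Real.sqrt 2)^2)^2*(Real.sqrt 2) := by ring
      _ = 4*Real.sqrt 2 := by rw [hsqrt2]; norm_num
  have hfinal2 : a ≤ 100000*(d + d*(Real.sqrt 2 * Real.sqrt E) + 2*E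
      + 4*Real.sqrt 2*(Real.sqrt E)^5) := by
    have he5 : e^5 = 4*Real.sqrt 2*(Real.sqrt E)^5 := by
      rw [heval, show (Real.sqrt 2 * Real.sqrt E)^5 = (Real.sqrt 2)^5*(Real.sqrt E)^5 by ring,
        h25]
    have he2' : e^2 = 2*E := he2E
    rw [← heval, ← he5, ← he2']
    exact hclose
  rw [hE52]
  have hb1 : Real.sqrt 2 * (d * Real.sqrt E) ≤ 2 * (d * Real.sqrt E) :=
    mul_le_mul_of_nonneg_right hs2le (mul_nonneg hd_nn hsE0)
  have hb2 : Real.sqrt 2 * (Real.sqrt E)^5 ≤ 2 * (Real.sqrt E)^5 :=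
    mul_le_mul_of_nonneg_right hs2le (pow_nonneg hsE0 5)
  have hb3 : 0 ≤ d * Real.sqrt E := mul_nonneg hd_nn hsE0
  have hb4 : 0 ≤ (Real.sqrt E)^5 := pow_nonneg hsE0 5
  linarith [hfinal2, hb1, hb2, hb3, hb4, hE0, hd_nn]
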